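/- For the objective function H(P) = (2/(N(N−1))) Σ_{i≠j} log|P_i − P_j|⁻¹ + (1/N) Σ_i V(P_i) with V(x) = x², H is bounded below on the set of N-tuples of distinct real numbers and attains its infimum; moreover any minimizer P* has pairwise distinct coordinates. -/

import Mathlib

/-!
Absorbing part of the external field into the kernel, `log |x - y|⁻¹ + (x² + y²)/8 + 3 ≥ 0`
(from `log t ≤ t - 1` and `|x - y| ≤ |x| + |y|`), writes `H(P)` as a nonnegative pair sum plus
`Σ P_i² / (2N) - 6`. Hence `H ≥ -6`, and on the sublevel set `{H ≤ H(Q)}` of a fixed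
configuration `Q` the points lie in a fixed cube and are pairwise `δ`-separated for a fixed
`δ > 0`. This set is compact and `H` is continuous on it, so `H` attains its minimum there, and
that minimum is global.
-/

open Finset

/-- The Fekete-point objective function with external field `V(x) = x²`:
`H(P) = (2/(N(N-1))) Σ_{i ≠ j} log |P_i - P_j|⁻¹ + (1/N) Σ_i P_i²`. -/
noncomputable def feketeH (N : ℕ) (P : Fin N → ℝ) : ℝ :=
  (2 / ((N : ℝ) * ((N : ℝ) - 1))) *
      ∑ i, ∑ j, (if i ≠ j then Real.log (|P i - P j|⁻¹) else 0) +
    (1 / (N : ℝ)) * ∑ i, (P i) ^ 2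

theorem IsCompact.exists_isMinOn_of_sublevel_subset {α β : Type*} [LinearOrder α]
    [TopologicalSpace α] [ClosedIicTopology α] [TopologicalSpace β] {f : β → α} {s K : Set β}
    (hK : IsCompact K) (hf : ContinuousOn f K) {x₀ : β} (hx₀ : x₀ ∈ s)
    (hsub : ∀ x ∈ s, f x ≤ f x₀ → x ∈ K) : ∃ x ∈ K, IsMinOn f s x := by
  obtain ⟨x, hxK, hmin⟩ := hK.exists_isMinOn ⟨x₀, hsub x₀ hx₀ le_rfl⟩ hf
  refine ⟨x, hxK, fun y hy => ?_⟩
  by_cases hy₀ : f y ≤ f x₀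
  · exact hmin (hsub y hy hy₀)
  · exact (hmin (hsub x₀ hx₀ le_rfl)).trans (le_of_not_ge hy₀)

theorem Finset.sum_sum_erase_add {ι R : Type*} [Fintype ι] [DecidableEq ι] [CommRing R]
    (a : ι → R) :
    ∑ i, ∑ j ∈ univ.erase i, (a i + a j) = 2 * ((Fintype.card ι : R) - 1) * ∑ i, a i := by
  simp only [sum_erase_eq_sub (mem_univ _), sum_add_distrib, sum_sub_distrib, sum_const,
    card_univ, nsmul_eq_mul, ← mul_sum]
  ring

/-- Only an eighth of the field is absorbed into the kernel, so that half of the confinement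
`(1/N) Σ P_i²` survives in `feketeH_eq`. -/
noncomputable def shiftedLogKernel (x y : ℝ) : ℝ :=
  Real.log |x - y|⁻¹ + (x ^ 2 + y ^ 2) / 8 + 3

theorem log_inv_abs_sub_le_shiftedLogKernel (x y : ℝ) :
    Real.log |x - y|⁻¹ ≤ shiftedLogKernel x y := by
  unfold shiftedLogKernel
  have : 0 ≤ (x ^ 2 + y ^ 2) / 8 := by positivity
  linarith

theorem shiftedLogKernel_nonneg (x y : ℝ) : 0 ≤ shiftedLogKernel x y := by
  unfold shiftedLogKernel
  rcases eq_or_ne x y with rfl | hxy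
  · rw [sub_self, abs_zero, inv_zero, Real.log_zero]
    positivity
  have hlog : Real.log |x - y| ≤ |x| + |y| - 1 :=
    (Real.log_le_sub_one_of_pos (abs_pos.2 (sub_ne_zero.2 hxy))).trans (by linarith [abs_sub x y])
  rw [Real.log_inv]
  nlinarith [sq_nonneg (|x| - 4), sq_nonneg (|y| - 4), sq_abs x, sq_abs y]

theorem feketeH_eq {N : ℕ} (hN : 2 ≤ N) (P : Fin N → ℝ) :
    feketeH N P = 2 / ((N : ℝ) * ((N : ℝ) - 1)) *
      ∑ i, ∑ j ∈ univ.erase i, shiftedLogKernel (P i) (P j) + (∑ i, P i ^ 2) / (2 * N) - 6 := by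
  have hN' : (2 : ℝ) ≤ N := by exact_mod_cast hN
  have hpair := sum_sum_erase_add fun i => P i ^ 2 / 8
  simp only [Fintype.card_fin, ← sum_div] at hpair
  have hsplit : ∀ i, ∑ j, (if i ≠ j then Real.log |P i - P j|⁻¹ else 0) =
      ∑ j ∈ univ.erase i, shiftedLogKernel (P i) (P j)
        - ∑ j ∈ univ.erase i, (P i ^ 2 / 8 + P j ^ 2 / 8) - ∑ j ∈ univ.erase i, (3 : ℝ) := by
    intro i
    rw [← sum_filter, filter_ne, ← sum_sub_distrib, ← sum_sub_distrib]
    refine sum_congr rfl fun j _ => ?_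
    unfold shiftedLogKernel; ring
  simp only [feketeH, hsplit, sum_sub_distrib, hpair, sum_const, card_erase_of_mem (mem_univ _),
    card_univ, Fintype.card_fin, nsmul_eq_mul]
  have : (N : ℝ) - 1 ≠ 0 := by linarith
  field_simp
  push_cast [Nat.cast_sub (by omega : 1 ≤ N)]
  ring

section
variable {N : ℕ}

theorem feketeH_weight_pos (hN : 2 ≤ N) : 0 < 2 / ((N : ℝ) * ((N : ℝ) - 1)) := by
  have hN' : (2 : ℝ) ≤ N := by exact_mod_cast hN
  have : (0 : ℝ) < N * (N - 1) := by nlinarith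
  positivity

theorem sum_sq_div_sub_six_le_feketeH (hN : 2 ≤ N) (P : Fin N → ℝ) :
    (∑ i, P i ^ 2) / (2 * N) - 6 ≤ feketeH N P := by
  rw [feketeH_eq hN]
  have : 0 ≤ 2 / ((N : ℝ) * ((N : ℝ) - 1)) *
      ∑ i, ∑ j ∈ univ.erase i, shiftedLogKernel (P i) (P j) :=
    mul_nonneg (feketeH_weight_pos hN).le
      (sum_nonneg fun _ _ => sum_nonneg fun _ _ => shiftedLogKernel_nonneg _ _)
  linarith

theorem log_inv_abs_sub_le_feketeH (hN : 2 ≤ N) (P : Fin N → ℝ) {i j : Fin N} (hij : i ≠ j) :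
    2 / ((N : ℝ) * ((N : ℝ) - 1)) * Real.log |P i - P j|⁻¹ - 6 ≤ feketeH N P := by
  rw [feketeH_eq hN]
  have hpair : Real.log |P i - P j|⁻¹ ≤ ∑ i, ∑ j ∈ univ.erase i, shiftedLogKernel (P i) (P j) :=
    calc Real.log |P i - P j|⁻¹ ≤ shiftedLogKernel (P i) (P j) :=
          log_inv_abs_sub_le_shiftedLogKernel _ _
      _ ≤ ∑ j ∈ univ.erase i, shiftedLogKernel (P i) (P j) :=
          single_le_sum (fun _ _ => shiftedLogKernel_nonneg _ _)
            (mem_erase.2 ⟨hij.symm, mem_univ _⟩)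
      _ ≤ _ := single_le_sum (f := fun i => ∑ j ∈ univ.erase i, shiftedLogKernel (P i) (P j))
          (fun _ _ => sum_nonneg fun _ _ => shiftedLogKernel_nonneg _ _) (mem_univ i)
  have : 0 ≤ (∑ i, P i ^ 2) / (2 * N) := by positivity
  linarith [mul_le_mul_of_nonneg_left hpair (feketeH_weight_pos hN).le]

theorem continuousOn_feketeH : ContinuousOn (feketeH N) {P | Function.Injective P} := by
  refine ContinuousOn.add (continuousOn_const.mul (continuousOn_finsetSum _ fun i _ =>
    continuousOn_finsetSum _ fun j _ => ?_)) (by fun_prop)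
  split_ifs with hij
  · have hne : ∀ P ∈ {P : Fin N → ℝ | Function.Injective P}, |P i - P j| ≠ 0 :=
      fun P hP => abs_ne_zero.2 (sub_ne_zero.2 (hP.ne hij))
    exact ((by fun_prop : Continuous fun P : Fin N → ℝ => |P i - P j|).continuousOn.inv₀ hne).log
      fun P hP => inv_ne_zero (hne P hP)
  · exact continuousOn_const

def separatedCube (N : ℕ) (r δ : ℝ) : Set (Fin N → ℝ) :=
  {P | (∀ i, |P i| ≤ r) ∧ ∀ i j, i ≠ j → δ ≤ |P i - P j|}

theorem isCompact_separatedCube (r δ : ℝ) : IsCompact (separatedCube N r δ) := by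
  have hcube : IsCompact (Set.univ.pi fun _ : Fin N => Set.Icc (-r) r) :=
    isCompact_univ_pi fun _ => isCompact_Icc
  have hsep : IsClosed {P : Fin N → ℝ | ∀ i j, i ≠ j → δ ≤ |P i - P j|} := by
    simp only [Set.ofPred_forall]
    exact isClosed_iInter fun i => isClosed_iInter fun j => isClosed_iInter fun _ =>
      isClosed_le continuous_const (by fun_prop)
  convert hcube.inter_right hsep using 1
  ext P
  simp only [separatedCube, Set.mem_inter_iff, Set.mem_univ_pi, Set.mem_Icc, Set.mem_ofPred_eq,
    abs_le]

theorem injective_of_mem_separatedCube {r δ : ℝ} (hδ : 0 < δ) {P : Fin N → ℝ}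
    (hP : P ∈ separatedCube N r δ) : Function.Injective P := by
  intro i j hPij
  by_contra hij
  have := hP.2 i j hij
  rw [hPij, sub_self, abs_zero] at this
  linarith

theorem mem_separatedCube_of_feketeH_le (hN : 2 ≤ N) {P : Fin N → ℝ}
    (hP : Function.Injective P) {c : ℝ} (hc : feketeH N P ≤ c) :
    P ∈ separatedCube N √(2 * N * (c + 6)) (Real.exp (-(N * (N - 1) * (c + 6) / 2))) := by
  refine ⟨fun i => Real.abs_le_sqrt ?_, fun i j hij => ?_⟩
  · have hS : (∑ k, P k ^ 2) / (2 * N) ≤ c + 6 := by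
      linarith [sum_sq_div_sub_six_le_feketeH hN P]
    rw [div_le_iff₀ (by have := hN; positivity)] at hS
    calc P i ^ 2 ≤ ∑ k, P k ^ 2 := single_le_sum (fun k _ => sq_nonneg (P k)) (mem_univ i)
      _ ≤ 2 * N * (c + 6) := by linarith
  · have hpos : 0 < |P i - P j| := abs_pos.2 (sub_ne_zero.2 (hP.ne hij))
    have := log_inv_abs_sub_le_feketeH hN P hij
    rw [← Real.le_log_iff_exp_le hpos]
    rw [Real.log_inv] at this
    have hlog : -Real.log |P i - P j| ≤ (c + 6) / (2 / ((N : ℝ) * ((N : ℝ) - 1))) := by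
      rw [le_div_iff₀' (feketeH_weight_pos hN)]; linarith
    rw [div_div_eq_mul_div] at hlog
    linarith

end

/-- For `V(x) = x²` and `N ≥ 2`, the objective `H` is bounded below on the set of
`N`-tuples with pairwise distinct entries and attains its infimum there; a minimizer
`P*` has pairwise distinct coordinates. -/
theorem feketeH_bddBelow_and_attains_min {N : ℕ} (hN : 2 ≤ N) :
    (∃ c : ℝ, ∀ P : Fin N → ℝ, Function.Injective P → c ≤ feketeH N P) ∧
    (∃ Pstar : Fin N → ℝ, Function.Injective Pstar ∧
      ∀ P : Fin N → ℝ, Function.Injective P → feketeH N Pstar ≤ feketeH N P) := by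
  refine ⟨⟨-6, fun P _ => ?_⟩, ?_⟩
  · have := sum_sq_div_sub_six_le_feketeH hN P
    have : 0 ≤ (∑ i, P i ^ 2) / (2 * N) := by positivity
    linarith
  have hQ : Function.Injective fun i : Fin N => (i : ℝ) :=
    Nat.cast_injective.comp Fin.val_injective
  obtain ⟨Pstar, hK, hmin⟩ :=
    (isCompact_separatedCube _ _).exists_isMinOn_of_sublevel_subset
      (continuousOn_feketeH.mono fun _ hP => injective_of_mem_separatedCube (Real.exp_pos _) hP)
      (Set.mem_ofPred.2 hQ) fun P hP hle => mem_separatedCube_of_feketeH_le hN hP hle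
  exact ⟨Pstar, injective_of_mem_separatedCube (Real.exp_pos _) hK, fun P hP => hmin hP⟩
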